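/- arXiv:2105.01323 — 4 statements merged into one kernel-verified Lean document; each statement's English description precedes it below -/
import Mathlib

section
/- The summed grafting product T1 ↘ T2 = Σ_{v ∈ X2} T1 ↘_v T2 on linear combinations of connected finite preordered sets satisfies the left pre-Lie identity: T1 ↘ (T2 ↘ T3) − (T1 ↘ T2) ↘ T3 = T2 ↘ (T1 ↘ T3) − (T2 ↘ T1) ↘ T3. -/
/-- The grafting `T₁ ↘_v T₂` of a preordered set `(X, r)` over the point `v`
of a preordered set `(Y, s)`, as a relation on the disjoint union `X ⊕ Y`. -/
def graft {X Y : Type*} (r : X → X → Prop) (s : Y → Y → Prop) (v : Y)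
    (a b : X ⊕ Y) : Prop :=
  match a, b with
  | Sum.inl x, Sum.inl y => r x y
  | Sum.inr x, Sum.inr y => s x y
  | Sum.inr x, Sum.inl _ => s x v
  | Sum.inl _, Sum.inr _ => False

/-- A preordered set is connected when its comparability graph is connected. -/
def ConnectedRel {X : Type*} (r : X → X → Prop) : Prop :=
  ∀ a b : X, Relation.ReflTransGen (fun x y => r x y ∨ r y x) a b

/-- Transport of a relation along a bijection. -/
def reindex {A B : Type*} (e : A ≃ B) (r : A → A → Prop) : B → B → Prop :=
  fun a b => r (e.symm a) (e.symm b)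

lemma graft_inl {X1 X2 X3 : Type*}
    (r1 : X1 → X1 → Prop) (r2 : X2 → X2 → Prop) (r3 : X3 → X3 → Prop)
    (v : X2) (w : X3) :
    graft r1 (graft r2 r3 w) (Sum.inl v)
      = reindex (Equiv.sumAssoc X1 X2 X3) (graft (graft r1 r2 v) r3 w) := by
  funext a b
  rcases a with x | (x | x) <;> rcases b with y | (y | y) <;>
    simp [graft, reindex, Equiv.sumAssoc]

lemma graft_inr {X1 X2 X3 : Type*}
    (r1 : X1 → X1 → Prop) (r2 : X2 → X2 → Prop) (r3 : X3 → X3 → Prop)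
    (u w : X3) :
    graft r1 (graft r2 r3 w) (Sum.inr u)
      = reindex ((Equiv.sumAssoc X2 X1 X3).symm.trans
          (((Equiv.sumComm X2 X1).sumCongr (Equiv.refl X3)).trans
            (Equiv.sumAssoc X1 X2 X3)))
          (graft r2 (graft r1 r3 u) (Sum.inr w)) := by
  funext a b
  rcases a with x | (x | x) <;> rcases b with y | (y | y) <;>
    simp [graft, reindex, Equiv.sumAssoc, Equiv.sumComm]

lemma reindex_reindex {A B C : Type*} (e : A ≃ B) (f : B ≃ C) (r : A → A → Prop) :
    reindex f (reindex e r) = reindex (e.trans f) r := rfl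

open scoped Classical in
/-- The left pre-Lie identity for the summed grafting product
`T₁ ↘ T₂ = Σ_{v ∈ X₂} T₁ ↘_v T₂` on linear combinations of connected finite
preordered sets:
`T₁ ↘ (T₂ ↘ T₃) − (T₁ ↘ T₂) ↘ T₃ = T₂ ↘ (T₁ ↘ T₃) − (T₂ ↘ T₁) ↘ T₃`,
as an identity in the free vector space on preorders on `X₁ ⊔ X₂ ⊔ X₃`. -/
theorem stmt5 {X1 X2 X3 : Type*} [Fintype X1] [Fintype X2] [Fintype X3]
    (r1 : X1 → X1 → Prop) (r2 : X2 → X2 → Prop) (r3 : X3 → X3 → Prop)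
    (h1r : Reflexive r1) (h1t : Transitive r1) (h1c : ConnectedRel r1)
    (h2r : Reflexive r2) (h2t : Transitive r2) (h2c : ConnectedRel r2)
    (h3r : Reflexive r3) (h3t : Transitive r3) (h3c : ConnectedRel r3) :
    (∑ w : X3, ∑ p : X2 ⊕ X3,
        Finsupp.single (graft r1 (graft r2 r3 w) p) (1 : ℚ))
      - (∑ v : X2, ∑ w : X3,
          Finsupp.single
            (reindex (Equiv.sumAssoc X1 X2 X3) (graft (graft r1 r2 v) r3 w)) (1 : ℚ))
    = (∑ w : X3, ∑ p : X1 ⊕ X3,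
        Finsupp.single
          (reindex ((Equiv.sumAssoc X2 X1 X3).symm.trans
              (((Equiv.sumComm X2 X1).sumCongr (Equiv.refl X3)).trans
                (Equiv.sumAssoc X1 X2 X3)))
            (graft r2 (graft r1 r3 w) p)) (1 : ℚ))
      - (∑ v : X1, ∑ w : X3,
          Finsupp.single
            (reindex (((Equiv.sumComm X2 X1).sumCongr (Equiv.refl X3)).trans
                (Equiv.sumAssoc X1 X2 X3))
              (graft (graft r2 r1 v) r3 w)) (1 : ℚ)) := by
  classical
  set E : (X2 ⊕ (X1 ⊕ X3)) ≃ (X1 ⊕ (X2 ⊕ X3)) :=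
    (Equiv.sumAssoc X2 X1 X3).symm.trans
      (((Equiv.sumComm X2 X1).sumCongr (Equiv.refl X3)).trans
        (Equiv.sumAssoc X1 X2 X3)) with hE
  -- split each summation over a sum type
  have split1 : ∀ w : X3,
      (∑ p : X2 ⊕ X3, Finsupp.single (graft r1 (graft r2 r3 w) p) (1 : ℚ))
        = (∑ v : X2, Finsupp.single (graft r1 (graft r2 r3 w) (Sum.inl v)) (1 : ℚ))
          + (∑ u : X3, Finsupp.single (graft r1 (graft r2 r3 w) (Sum.inr u)) (1 : ℚ)) :=
    fun w => Fintype.sum_sum_type _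
  have split2 : ∀ w : X3,
      (∑ p : X1 ⊕ X3,
          Finsupp.single (reindex E (graft r2 (graft r1 r3 w) p)) (1 : ℚ))
        = (∑ v : X1,
            Finsupp.single (reindex E (graft r2 (graft r1 r3 w) (Sum.inl v))) (1 : ℚ))
          + (∑ u : X3,
            Finsupp.single (reindex E (graft r2 (graft r1 r3 w) (Sum.inr u))) (1 : ℚ)) :=
    fun w => Fintype.sum_sum_type _
  simp only [split1, split2, Finset.sum_add_distrib]
  -- the `inl` parts match the subtracted double sums
  have c1 : (∑ w : X3, ∑ v : X2,
        Finsupp.single (graft r1 (graft r2 r3 w) (Sum.inl v)) (1 : ℚ))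
      = ∑ v : X2, ∑ w : X3,
          Finsupp.single
            (reindex (Equiv.sumAssoc X1 X2 X3) (graft (graft r1 r2 v) r3 w)) (1 : ℚ) := by
    rw [Finset.sum_comm]
    simp only [graft_inl]
  have c2 : (∑ w : X3, ∑ v : X1,
        Finsupp.single (reindex E (graft r2 (graft r1 r3 w) (Sum.inl v))) (1 : ℚ))
      = ∑ v : X1, ∑ w : X3,
          Finsupp.single
            (reindex (((Equiv.sumComm X2 X1).sumCongr (Equiv.refl X3)).trans
                (Equiv.sumAssoc X1 X2 X3))
              (graft (graft r2 r1 v) r3 w)) (1 : ℚ) := by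
    rw [Finset.sum_comm]
    congr 1
    funext v
    congr 1
    funext w
    rw [graft_inl r2 r1 r3 v w, hE, reindex_reindex]
    rw [← Equiv.trans_assoc, Equiv.self_trans_symm, Equiv.refl_trans]
  have c3 : (∑ w : X3, ∑ u : X3,
        Finsupp.single (graft r1 (graft r2 r3 w) (Sum.inr u)) (1 : ℚ))
      = ∑ w : X3, ∑ u : X3,
          Finsupp.single (reindex E (graft r2 (graft r1 r3 w) (Sum.inr u))) (1 : ℚ) := by
    rw [Finset.sum_comm]
    simp only [graft_inr r1 r2 r3, hE]
  rw [c1, c2, c3]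
  abel
end

section
/- Let T = (X, ≤_T), S = (Y, ≤_S), U = (Z, ≤_U) be connected finite preordered sets on pairwise disjoint sets, s ∈ Y and u ∈ Z. Then T ↗^s (S ↘_u U) = Ψ_{X,Z}((T ↗^s S) ↘_u U) as preorders on X ⊔ Y ⊔ Z. -/
/-- The co-grafting `T ↗^v S`: `x ≤ y` iff they are comparable within `T` or
within `S`, or `x ∈ T`, `y ∈ S` and `v ≤_S y`. -/
def cograft {X Y : Type*} (r : X → X → Prop) (s : Y → Y → Prop) (v : Y)
    (a b : X ⊕ Y) : Prop :=
  match a, b with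
  | Sum.inl x, Sum.inl y => r x y
  | Sum.inr x, Sum.inr y => s x y
  | Sum.inl _, Sum.inr y => s v y
  | Sum.inr _, Sum.inl _ => False

/-- The relation `Ψ_{A1,A2}(≤_T)`: `a ≤ b` iff `a ≤_T b`, except that elements
of `A1` and elements of `A2` are declared incomparable (unless `a = b`). -/
def psi {A : Type*} (A1 A2 : Set A) (r : A → A → Prop) (a b : A) : Prop :=
  a = b ∨ (r a b ∧ ¬(a ∈ A1 ∧ b ∈ A2) ∧ ¬(a ∈ A2 ∧ b ∈ A1))

/-- `T ↗^s (S ↘_u U) = Ψ_{X,Z}((T ↗^s S) ↘_u U)` as preorders on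
`X ⊔ Y ⊔ Z`, transported via `(X ⊕ Y) ⊕ Z ≃ X ⊕ (Y ⊕ Z)`. -/
theorem stmt10 {X Y Z : Type*} [Finite X] [Finite Y] [Finite Z]
    (r : X → X → Prop) (s : Y → Y → Prop) (t : Z → Z → Prop)
    (hrr : Reflexive r) (hrt : Transitive r) (hrc : ConnectedRel r)
    (hsr : Reflexive s) (hst : Transitive s) (hsc : ConnectedRel s)
    (htr : Reflexive t) (htt : Transitive t) (htc : ConnectedRel t)
    (sp : Y) (u : Z) :
    ∀ a b : X ⊕ (Y ⊕ Z),
      cograft r (graft s t u) (Sum.inl sp) a b ↔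
        psi (Set.range Sum.inl) (Set.range fun z : Z => Sum.inr (Sum.inr z))
          (reindex (Equiv.sumAssoc X Y Z) (graft (cograft r s sp) t u)) a b := by
  rintro (x | y | z) (x' | y' | z') <;>
    simp [cograft, graft, psi, reindex, Equiv.sumAssoc] <;>
    rintro rfl <;> first | exact hrr _ | exact hsr _ | exact htr _
end

section
/- Let T = (X, ≤_T), S = (Y, ≤_S), U = (Z, ≤_U) be connected finite preordered sets on pairwise disjoint sets, s ∈ Y and u ∈ Z. Then T ↘_s (S ↗^u U) = Ψ_{X,Z}((T ↘_s S) ↗^u U) as preorders on X ⊔ Y ⊔ Z. -/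
/-- `T ↘_s (S ↗^u U) = Ψ_{X,Z}((T ↘_s S) ↗^u U)` as preorders on
`X ⊔ Y ⊔ Z`, transported via `(X ⊕ Y) ⊕ Z ≃ X ⊕ (Y ⊕ Z)`. -/
theorem stmt11 {X Y Z : Type*} [Finite X] [Finite Y] [Finite Z]
    (r : X → X → Prop) (s : Y → Y → Prop) (t : Z → Z → Prop)
    (hrr : Reflexive r) (hrt : Transitive r) (hrc : ConnectedRel r)
    (hsr : Reflexive s) (hst : Transitive s) (hsc : ConnectedRel s)
    (htr : Reflexive t) (htt : Transitive t) (htc : ConnectedRel t)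
    (sp : Y) (u : Z) :
    ∀ a b : X ⊕ (Y ⊕ Z),
      graft r (cograft s t u) (Sum.inl sp) a b ↔
        psi (Set.range Sum.inl) (Set.range fun z : Z => Sum.inr (Sum.inr z))
          (reindex (Equiv.sumAssoc X Y Z) (cograft (graft r s sp) t u)) a b := by
  rintro (x | y | z) (x' | y' | z') <;>
    simp [graft, cograft, psi, reindex, Equiv.sumAssoc] <;>
    rintro rfl <;> first | exact hrr _ | exact hsr _ | exact htr _
end

section
/- For connected finite preordered sets T = (X, ≤_T), S = (Y, ≤_S), U = (Z, ≤_U) on pairwise disjoint sets, the summed operations satisfy: T ↗ (S ↘ U) − Ψ_{X,Z}((T ↗ S) ↘ U) = S ↘ (T ↗ U) − Ψ_{Y,Z}((S ↘ T) ↗ U), as an identity of formal linear combinations of preorders on X ⊔ Y ⊔ Z. -/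
open scoped Classical in
/-- `T ↗ (S ↘ U) − Ψ_{X,Z}((T ↗ S) ↘ U) = S ↘ (T ↗ U) − Ψ_{Y,Z}((S ↘ T) ↗ U)`
as an identity of formal linear combinations of preorders on `X ⊔ Y ⊔ Z`. -/
theorem stmt14 {X Y Z : Type*} [Fintype X] [Fintype Y] [Fintype Z]
    (r : X → X → Prop) (s : Y → Y → Prop) (t : Z → Z → Prop)
    (hrr : Reflexive r) (hrt : Transitive r) (hrc : ConnectedRel r)
    (hsr : Reflexive s) (hst : Transitive s) (hsc : ConnectedRel s)
    (htr : Reflexive t) (htt : Transitive t) (htc : ConnectedRel t) :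
    (∑ u : Z, ∑ p : Y ⊕ Z,
        Finsupp.single (cograft r (graft s t u) p) (1 : ℚ))
      - (∑ sp : Y, ∑ u : Z,
          Finsupp.single
            (psi (Set.range Sum.inl) (Set.range fun z : Z => Sum.inr (Sum.inr z))
              (reindex (Equiv.sumAssoc X Y Z) (graft (cograft r s sp) t u)))
            (1 : ℚ))
    = (∑ u : Z, ∑ q : X ⊕ Z,
        Finsupp.single
          (reindex ((Equiv.sumAssoc Y X Z).symm.trans
              (((Equiv.sumComm Y X).sumCongr (Equiv.refl Z)).trans
                (Equiv.sumAssoc X Y Z)))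
            (graft s (cograft r t u) q)) (1 : ℚ))
      - (∑ x : X, ∑ u : Z,
          Finsupp.single
            (psi (Set.range fun y : Y => Sum.inr (Sum.inl y))
              (Set.range fun z : Z => Sum.inr (Sum.inr z))
              (reindex (((Equiv.sumComm Y X).sumCongr (Equiv.refl Z)).trans
                  (Equiv.sumAssoc X Y Z))
                (cograft (graft s r x) t u)))
            (1 : ℚ)) := by
  have hr := fun x => hrr x
  have hs := fun y => hsr y
  have ht := fun z => htr z
  have hA : ∀ (u : Z) (y0 : Y),
      cograft r (graft s t u) (Sum.inl y0)
        = psi (Set.range Sum.inl) (Set.range fun z : Z => Sum.inr (Sum.inr z))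
            (reindex (Equiv.sumAssoc X Y Z) (graft (cograft r s y0) t u)) := by
    intro u y0
    funext a b
    apply propext
    rcases a with x | (y | z) <;> rcases b with x' | (y' | z') <;>
      simp [cograft, graft, psi, reindex] <;> aesop
  have hB : ∀ (u : Z) (x0 : X),
      reindex ((Equiv.sumAssoc Y X Z).symm.trans
          (((Equiv.sumComm Y X).sumCongr (Equiv.refl Z)).trans (Equiv.sumAssoc X Y Z)))
        (graft s (cograft r t u) (Sum.inl x0))
        = psi (Set.range fun y : Y => Sum.inr (Sum.inl y))
            (Set.range fun z : Z => Sum.inr (Sum.inr z))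
            (reindex (((Equiv.sumComm Y X).sumCongr (Equiv.refl Z)).trans (Equiv.sumAssoc X Y Z))
              (cograft (graft s r x0) t u)) := by
    intro u x0
    funext a b
    apply propext
    rcases a with x | (y | z) <;> rcases b with x' | (y' | z') <;>
      simp [cograft, graft, psi, reindex] <;> aesop
  have hC : ∀ (u z0 : Z),
      cograft r (graft s t u) (Sum.inr z0)
        = reindex ((Equiv.sumAssoc Y X Z).symm.trans
            (((Equiv.sumComm Y X).sumCongr (Equiv.refl Z)).trans (Equiv.sumAssoc X Y Z)))
          (graft s (cograft r t z0) (Sum.inr u)) := by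
    intro u z0
    funext a b
    apply propext
    rcases a with x | (y | z) <;> rcases b with x' | (y' | z') <;>
      simp [cograft, graft, reindex]
  simp only [Fintype.sum_sum_type, Finset.sum_add_distrib]
  have h1 : (∑ u : Z, ∑ y0 : Y,
      Finsupp.single (cograft r (graft s t u) (Sum.inl y0)) (1 : ℚ))
      = ∑ sp : Y, ∑ u : Z,
          Finsupp.single
            (psi (Set.range Sum.inl) (Set.range fun z : Z => Sum.inr (Sum.inr z))
              (reindex (Equiv.sumAssoc X Y Z) (graft (cograft r s sp) t u))) (1 : ℚ) := by
    rw [Finset.sum_comm]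
    exact Finset.sum_congr rfl fun y0 _ => Finset.sum_congr rfl fun u _ => by rw [hA u y0]
  have h2 : (∑ u : Z, ∑ x0 : X,
      Finsupp.single (reindex ((Equiv.sumAssoc Y X Z).symm.trans
          (((Equiv.sumComm Y X).sumCongr (Equiv.refl Z)).trans (Equiv.sumAssoc X Y Z)))
        (graft s (cograft r t u) (Sum.inl x0))) (1 : ℚ))
      = ∑ x : X, ∑ u : Z,
          Finsupp.single
            (psi (Set.range fun y : Y => Sum.inr (Sum.inl y))
              (Set.range fun z : Z => Sum.inr (Sum.inr z))
              (reindex (((Equiv.sumComm Y X).sumCongr (Equiv.refl Z)).trans (Equiv.sumAssoc X Y Z))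
                (cograft (graft s r x) t u))) (1 : ℚ) := by
    rw [Finset.sum_comm]
    exact Finset.sum_congr rfl fun x0 _ => Finset.sum_congr rfl fun u _ => by rw [hB u x0]
  have h3 : (∑ u : Z, ∑ z0 : Z,
      Finsupp.single (cograft r (graft s t u) (Sum.inr z0)) (1 : ℚ))
      = ∑ u : Z, ∑ z0 : Z,
          Finsupp.single (reindex ((Equiv.sumAssoc Y X Z).symm.trans
            (((Equiv.sumComm Y X).sumCongr (Equiv.refl Z)).trans (Equiv.sumAssoc X Y Z)))
          (graft s (cograft r t u) (Sum.inr z0))) (1 : ℚ) := by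
    rw [Finset.sum_comm]
    exact Finset.sum_congr rfl fun z0 _ => Finset.sum_congr rfl fun u _ => by rw [hC u z0]
  rw [h1, h2, h3]
  abel
end
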